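/- Let θ > 0, κ ∈ ℝ, and suppose X ∈ L²(P) satisfies E[(X − κ)⁻] = 1/θ and X ∧ κ − E[X ∧ κ] = 1/θ − M̃/θ for some M̃ ∈ L²(P) with M̃ ≥ 0 and E[M̃] = 1. Then M̃ = θ·(X − κ)⁻ and the monotone mean-variance functional satisfies V_θ(X) ≥ E[X ∧ κ] − (θ/2)·Var(X ∧ κ) evaluated consistently, and in fact V_θ(X) = E[X·M̃] + E[M̃²]/(2θ) − 1/(2θ). -/

import Mathlib

open MeasureTheory ProbabilityTheory

private lemma integrable_mul_of_memL2 {Ω : Type*} [MeasurableSpace Ω] {P : Measure Ω}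
    {f g : Ω → ℝ} (hf : MemLp f 2 P) (hg : MemLp g 2 P) :
    Integrable (fun ω => f ω * g ω) P := by
  rw [← memLp_one_iff_integrable]
  have h : (1 : ENNReal) / 1 = 1 / 2 + 1 / 2 := by
    rw [ENNReal.div_add_div_same, one_div_one]
    norm_num
    rw [ENNReal.div_self (by norm_num) (by norm_num)]
  exact MemLp.smul (r := 1) hg hf

/-- Attainment of the monotone mean-variance infimum at the truncated optimizer: if
`E[(X − κ)⁻] = 1/θ` and `X ∧ κ − E[X ∧ κ] = 1/θ − M̃/θ` a.s. for a nonnegative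
unit-mean `M̃ ∈ L²`, then `M̃ = θ (X − κ)⁻` a.s. and
`V_θ(X) = E[X M̃] + E[M̃²]/(2θ) − 1/(2θ)`. -/
theorem stmt_19 {Ω : Type*} [MeasurableSpace Ω] (P : Measure Ω) [IsProbabilityMeasure P]
    (θ κ : ℝ) (hθ : 0 < θ)
    (X : Ω → ℝ) (hX : MemLp X 2 P)
    (hneg : ∫ ω, max (κ - X ω) 0 ∂P = 1 / θ)
    (Mt : Ω → ℝ) (hMt : MemLp Mt 2 P) (hMtnn : ∀ᵐ ω ∂P, 0 ≤ Mt ω)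
    (hMtmean : ∫ ω, Mt ω ∂P = 1)
    (hcompat : ∀ᵐ ω ∂P,
        min (X ω) κ - (∫ ω', min (X ω') κ ∂P) = 1 / θ - Mt ω / θ) :
    (∀ᵐ ω ∂P, Mt ω = θ * max (κ - X ω) 0) ∧
    sInf {r : ℝ | ∃ Y : Ω → ℝ, MemLp Y 2 P ∧ (∀ᵐ ω ∂P, 0 ≤ Y ω) ∧
        (∫ ω, Y ω ∂P = 1) ∧
        r = ∫ ω, (X ω * Y ω + (Y ω) ^ 2 / (2 * θ) - 1 / (2 * θ)) ∂P}
      = (∫ ω, X ω * Mt ω ∂P) + (∫ ω, (Mt ω) ^ 2 ∂P) / (2 * θ) - 1 / (2 * θ) := by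
  have hθ' : θ ≠ 0 := hθ.ne'
  -- L² facts
  have hNeg : MemLp (fun ω => max (κ - X ω) 0) 2 P := ((memLp_const κ).sub hX).pos_part
  have hPos : MemLp (fun ω => max (X ω - κ) 0) 2 P := (hX.sub (memLp_const κ)).pos_part
  -- pointwise identity for min
  have hmin : ∀ ω, min (X ω) κ = κ - max (κ - X ω) 0 := by
    intro ω
    rcases le_total (X ω) κ with h | h
    · rw [min_eq_left h, max_eq_left (by linarith)]; ring
    · rw [min_eq_right h, max_eq_right (by linarith)]; ring
  -- mean of min
  have hEmin : ∫ ω, min (X ω) κ ∂P = κ - 1 / θ := by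
    have : (fun ω => min (X ω) κ) = fun ω => κ - max (κ - X ω) 0 := funext hmin
    rw [this, integral_sub (integrable_const κ) (hNeg.integrable one_le_two), hneg,
      integral_const, probReal_univ, one_smul]
  -- Part 1
  have hMtEq : ∀ᵐ ω ∂P, Mt ω = θ * max (κ - X ω) 0 := by
    filter_upwards [hcompat] with ω h
    rw [hEmin, hmin ω] at h
    have h2 : Mt ω / θ = max (κ - X ω) 0 := by linarith
    rw [div_eq_iff hθ'] at h2
    rw [h2]; ring
  refine ⟨hMtEq, ?_⟩
  -- integrability facts for Mt
  have iXMt : Integrable (fun ω => X ω * Mt ω) P := integrable_mul_of_memL2 hX hMt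
  have iMt2 : Integrable (fun ω => (Mt ω) ^ 2) P := by
    simpa [pow_two] using integrable_mul_of_memL2 hMt hMt
  set v : ℝ := (∫ ω, X ω * Mt ω ∂P) + (∫ ω, (Mt ω) ^ 2 ∂P) / (2 * θ) - 1 / (2 * θ) with hv
  set S : Set ℝ := {r : ℝ | ∃ Y : Ω → ℝ, MemLp Y 2 P ∧ (∀ᵐ ω ∂P, 0 ≤ Y ω) ∧
        (∫ ω, Y ω ∂P = 1) ∧
        r = ∫ ω, (X ω * Y ω + (Y ω) ^ 2 / (2 * θ) - 1 / (2 * θ)) ∂P} with hS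
  -- value of the objective at any admissible Y
  have objval : ∀ Y : Ω → ℝ, MemLp Y 2 P →
      ∫ ω, (X ω * Y ω + (Y ω) ^ 2 / (2 * θ) - 1 / (2 * θ)) ∂P
        = (∫ ω, X ω * Y ω ∂P) + (∫ ω, (Y ω) ^ 2 ∂P) / (2 * θ) - 1 / (2 * θ) := by
    intro Y hY
    have i1 : Integrable (fun ω => X ω * Y ω) P := integrable_mul_of_memL2 hX hY
    have i2 : Integrable (fun ω => (Y ω) ^ 2) P := by
      simpa [pow_two] using integrable_mul_of_memL2 hY hY
    have i2' : Integrable (fun ω => (Y ω) ^ 2 / (2 * θ)) P := i2.div_const _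
    have i12 : Integrable (fun ω => X ω * Y ω + (Y ω) ^ 2 / (2 * θ)) P := i1.add i2'
    rw [integral_sub i12 (integrable_const _), integral_add i1 i2', integral_div,
      integral_const, probReal_univ, one_smul]
  -- membership
  have hvmem : v ∈ S := by
    refine ⟨Mt, hMt, hMtnn, hMtmean, ?_⟩
    rw [objval Mt hMt]
  -- lower bound
  have hlb : ∀ r ∈ S, v ≤ r := by
    rintro r ⟨Y, hY, hYnn, hYmean, rfl⟩
    have iXY : Integrable (fun ω => X ω * Y ω) P := integrable_mul_of_memL2 hX hY
    have iY2 : Integrable (fun ω => (Y ω) ^ 2) P := by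
      simpa [pow_two] using integrable_mul_of_memL2 hY hY
    have iY : Integrable Y P := hY.integrable one_le_two
    have iMtI : Integrable Mt P := hMt.integrable one_le_two
    have iPY : Integrable (fun ω => max (X ω - κ) 0 * Y ω) P :=
      integrable_mul_of_memL2 hPos hY
    set A : Ω → ℝ := fun ω => X ω * Y ω + (Y ω) ^ 2 / (2 * θ) - 1 / (2 * θ) with hA
    set B : Ω → ℝ := fun ω =>
      (X ω * Mt ω + (Mt ω) ^ 2 / (2 * θ) - 1 / (2 * θ)) + κ * (Y ω - Mt ω)
        + max (X ω - κ) 0 * Y ω with hB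
    have hAB : ∀ᵐ ω ∂P, B ω ≤ A ω := by
      filter_upwards [hMtEq, hYnn] with ω hm hy
      simp only [hA, hB]
      rcases le_total (X ω) κ with h | h
      · rw [max_eq_left (by linarith)] at hm
        rw [max_eq_right (by linarith)]
        have key : (X ω * Y ω + (Y ω) ^ 2 / (2 * θ) - 1 / (2 * θ)) -
            ((X ω * Mt ω + (Mt ω) ^ 2 / (2 * θ) - 1 / (2 * θ)) + κ * (Y ω - Mt ω)
              + 0 * Y ω) = (Y ω - Mt ω) ^ 2 / (2 * θ) := by
          rw [hm]; field_simp; ring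
        have hge : 0 ≤ (Y ω - Mt ω) ^ 2 / (2 * θ) := by positivity
        linarith
      · rw [max_eq_right (by linarith)] at hm
        rw [max_eq_left (by linarith)]
        have key : (X ω * Y ω + (Y ω) ^ 2 / (2 * θ) - 1 / (2 * θ)) -
            ((X ω * Mt ω + (Mt ω) ^ 2 / (2 * θ) - 1 / (2 * θ)) + κ * (Y ω - Mt ω)
              + (X ω - κ) * Y ω) = (Y ω) ^ 2 / (2 * θ) := by
          rw [hm]; field_simp; ring
        have hge : 0 ≤ (Y ω) ^ 2 / (2 * θ) := by positivity
        linarith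
    have iMt2' : Integrable (fun ω => (Mt ω) ^ 2 / (2 * θ)) P := iMt2.div_const _
    have i3 : Integrable (fun ω => X ω * Mt ω + (Mt ω) ^ 2 / (2 * θ)) P := iXMt.add iMt2'
    have i4 : Integrable (fun ω => X ω * Mt ω + (Mt ω) ^ 2 / (2 * θ) - 1 / (2 * θ)) P :=
      i3.sub (integrable_const _)
    have iYm : Integrable (fun ω => Y ω - Mt ω) P := iY.sub iMtI
    have i5 : Integrable (fun ω => κ * (Y ω - Mt ω)) P := iYm.const_mul κ
    have i6 : Integrable (fun ω =>
        X ω * Mt ω + (Mt ω) ^ 2 / (2 * θ) - 1 / (2 * θ) + κ * (Y ω - Mt ω)) P := i4.add i5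
    have iB : Integrable B P := i6.add iPY
    have iY2' : Integrable (fun ω => (Y ω) ^ 2 / (2 * θ)) P := iY2.div_const _
    have iA : Integrable A P := (iXY.add iY2').sub (integrable_const _)
    have hIB : ∫ ω, B ω ∂P ≤ ∫ ω, A ω ∂P := integral_mono_ae iB iA hAB
    have hBval : ∫ ω, B ω ∂P = v + ∫ ω, max (X ω - κ) 0 * Y ω ∂P := by
      rw [hB]
      rw [integral_add i6 iPY, integral_add i4 i5, integral_sub i3 (integrable_const _),
        integral_add iXMt iMt2', integral_div, integral_const, probReal_univ,
        one_smul, integral_const_mul, integral_sub iY iMtI,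
        hYmean, hMtmean]
      rw [hv]; ring
    have hPYnn : 0 ≤ ∫ ω, max (X ω - κ) 0 * Y ω ∂P := by
      apply integral_nonneg_of_ae
      filter_upwards [hYnn] with ω hy
      exact mul_nonneg (le_max_right _ _) hy
    have : v ≤ ∫ ω, B ω ∂P := by rw [hBval]; linarith
    calc v ≤ ∫ ω, B ω ∂P := this
      _ ≤ ∫ ω, A ω ∂P := hIB
  exact le_antisymm (csInf_le ⟨v, hlb⟩ hvmem) (le_csInf ⟨v, hvmem⟩ hlb)
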